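/- Let $u \in C^\infty(U \times \mathbb{R}^d)$ where $U \subseteq \mathbb{R}^n$ is open, and let $m \in \mathbb{R}$. The set $S$ of all $s \in \mathbb{R}_{>0}$ such that the function $(x,\xi) \mapsto u(x, \delta_s \xi) - s^m u(x,\xi)$ is Schwartz class in $\xi$ locally uniformly in $x$, is a subgroup of the multiplicative group $\mathbb{R}_{>0}$. Consequently, if the condition holds for all $s \in [1,2]$, it holds for all $s > 0$. -/

import Mathlib

open scoped BigOperators
noncomputable def Dop {k : ℕ} (i : Fin k) (h : (Fin k → ℝ) → ℝ) : (Fin k → ℝ) → ℝ :=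
  fun y => fderiv ℝ h y (Pi.single i 1)

noncomputable def DmL {k : ℕ} (β : Fin k → ℕ) (l : List (Fin k)) (g : (Fin k → ℝ) → ℝ) :
    (Fin k → ℝ) → ℝ :=
  (l.foldr (fun i F => (Dop i)^[β i] ∘ F) id) g

noncomputable def Dm {k : ℕ} (β : Fin k → ℕ) (g : (Fin k → ℝ) → ℝ) : (Fin k → ℝ) → ℝ :=
  ((List.finRange k).foldr
    (fun i F => (fun (h : (Fin k → ℝ) → ℝ) (y : Fin k → ℝ) =>
      fderiv ℝ h y (Pi.single i 1))^[β i] ∘ F) id) g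

theorem Dm_eq {k : ℕ} (β : Fin k → ℕ) (g : (Fin k → ℝ) → ℝ) :
    Dm β g = DmL β (List.finRange k) g := rfl

section basics
variable {k : ℕ} {s : Set (Fin k → ℝ)}

theorem Dop_congr (hs : IsOpen s) {i : Fin k} {g h : (Fin k → ℝ) → ℝ} (hgh : Set.EqOn g h s) :
    Set.EqOn (Dop i g) (Dop i h) s := by
  intro x hx
  unfold Dop
  rw [(hgh.eventuallyEq_of_mem (hs.mem_nhds hx)).fderiv_eq]

theorem Dop_contDiffOn (hs : IsOpen s) {i : Fin k} {g : (Fin k → ℝ) → ℝ} (hg : ContDiffOn ℝ (⊤ : ℕ∞) g s) :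
    ContDiffOn ℝ (⊤ : ℕ∞) (Dop i g) s :=
  (hg.fderiv_of_isOpen hs (by simp)).clm_apply contDiffOn_const

theorem Dop_comb (hs : IsOpen s) {i : Fin k} {g h : (Fin k → ℝ) → ℝ} (hg : ContDiffOn ℝ (⊤ : ℕ∞) g s)
    (hh : ContDiffOn ℝ (⊤ : ℕ∞) h s) (a b : ℝ) :
    Set.EqOn (Dop i (fun y => a * g y + b * h y))
      (fun x => a * Dop i g x + b * Dop i h x) s := by
  intro x hx
  have dg : DifferentiableAt ℝ g x :=
    (hg.differentiableOn (by simp)).differentiableAt (hs.mem_nhds hx)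
  have dh : DifferentiableAt ℝ h x :=
    (hh.differentiableOn (by simp)).differentiableAt (hs.mem_nhds hx)
  unfold Dop
  rw [fderiv_fun_add (dg.const_mul a) (dh.const_mul b), fderiv_const_mul dg, fderiv_const_mul dh]
  simp


theorem iterDop_congr (hs : IsOpen s) {i : Fin k} (m : ℕ) {g h : (Fin k → ℝ) → ℝ}
    (hgh : Set.EqOn g h s) : Set.EqOn ((Dop i)^[m] g) ((Dop i)^[m] h) s := by
  induction m with
  | zero => exact hgh
  | succ m ih =>
    simp only [Function.iterate_succ_apply']
    exact Dop_congr hs ih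

theorem iterDop_contDiffOn (hs : IsOpen s) {i : Fin k} (m : ℕ) {g : (Fin k → ℝ) → ℝ}
    (hg : ContDiffOn ℝ (⊤ : ℕ∞) g s) : ContDiffOn ℝ (⊤ : ℕ∞) ((Dop i)^[m] g) s := by
  induction m with
  | zero => exact hg
  | succ m ih =>
    simp only [Function.iterate_succ_apply']
    exact Dop_contDiffOn hs ih

theorem iterDop_comb (hs : IsOpen s) {i : Fin k} (m : ℕ) {g h : (Fin k → ℝ) → ℝ}
    (hg : ContDiffOn ℝ (⊤ : ℕ∞) g s) (hh : ContDiffOn ℝ (⊤ : ℕ∞) h s) (a b : ℝ) :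
    Set.EqOn ((Dop i)^[m] (fun y => a * g y + b * h y))
      (fun x => a * (Dop i)^[m] g x + b * (Dop i)^[m] h x) s := by
  induction m with
  | zero => exact fun x _ => rfl
  | succ m ih =>
    intro x hx
    simp only [Function.iterate_succ_apply']
    have h1 := Dop_congr hs (i := i) ih hx
    rw [h1]
    exact Dop_comb hs (iterDop_contDiffOn hs m hg) (iterDop_contDiffOn hs m hh) a b hx

theorem DmL_cons (β : Fin k → ℕ) (i : Fin k) (l : List (Fin k)) (g : (Fin k → ℝ) → ℝ) :
    DmL β (i :: l) g = (Dop i)^[β i] (DmL β l g) := rfl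

theorem DmL_congr (hs : IsOpen s) (β : Fin k → ℕ) (l : List (Fin k)) {g h : (Fin k → ℝ) → ℝ}
    (hgh : Set.EqOn g h s) : Set.EqOn (DmL β l g) (DmL β l h) s := by
  induction l with
  | nil => exact hgh
  | cons i l ih =>
    rw [DmL_cons, DmL_cons]
    exact iterDop_congr hs (β i) ih

theorem DmL_contDiffOn (hs : IsOpen s) (β : Fin k → ℕ) (l : List (Fin k))
    {g : (Fin k → ℝ) → ℝ} (hg : ContDiffOn ℝ (⊤ : ℕ∞) g s) : ContDiffOn ℝ (⊤ : ℕ∞) (DmL β l g) s := by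
  induction l with
  | nil => exact hg
  | cons i l ih =>
    rw [DmL_cons]
    exact iterDop_contDiffOn hs (β i) ih

theorem DmL_comb (hs : IsOpen s) (β : Fin k → ℕ) (l : List (Fin k)) {g h : (Fin k → ℝ) → ℝ}
    (hg : ContDiffOn ℝ (⊤ : ℕ∞) g s) (hh : ContDiffOn ℝ (⊤ : ℕ∞) h s) (a b : ℝ) :
    Set.EqOn (DmL β l (fun y => a * g y + b * h y))
      (fun x => a * DmL β l g x + b * DmL β l h x) s := by
  induction l with
  | nil => exact fun x _ => rfl
  | cons i l ih =>
    intro x hx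
    rw [DmL_cons, iterDop_congr hs (β i) ih hx, DmL_cons, DmL_cons]
    exact iterDop_comb hs (β i) (DmL_contDiffOn hs β l hg) (DmL_contDiffOn hs β l hh) a b hx

noncomputable def dil {d : ℕ} (ρ : Fin d → ℕ) (s : ℝ) (ξ : Fin d → ℝ) : Fin d → ℝ :=
  fun i => s ^ (ρ i) * ξ i

noncomputable def dilCLM {d : ℕ} (ρ : Fin d → ℕ) (t : ℝ) : (Fin d → ℝ) →L[ℝ] (Fin d → ℝ) :=
  ContinuousLinearMap.pi (fun i => t ^ (ρ i) • (ContinuousLinearMap.proj i))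

theorem dilCLM_apply {d : ℕ} (ρ : Fin d → ℕ) (t : ℝ) (ξ : Fin d → ℝ) :
    dilCLM ρ t ξ = dil ρ t ξ := rfl

theorem dil_eq {d : ℕ} (ρ : Fin d → ℕ) (t : ℝ) : dil ρ t = ⇑(dilCLM ρ t) := rfl

theorem dilCLM_single {d : ℕ} (ρ : Fin d → ℕ) (t : ℝ) (i : Fin d) :
    dilCLM ρ t (Pi.single i 1) = (t ^ (ρ i) : ℝ) • (Pi.single i 1 : Fin d → ℝ) := by
  funext j
  simp only [dilCLM_apply, dil, Pi.smul_apply, smul_eq_mul]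
  rcases eq_or_ne j i with h | h
  · subst h; simp
  · simp [Pi.single_apply, h]

theorem Dop_dil {d : ℕ} (ρ : Fin d → ℕ) {t : ℝ} (i : Fin d) {g : (Fin d → ℝ) → ℝ}
    (hg : ContDiff ℝ (⊤ : ℕ∞) g) (ξ : Fin d → ℝ) :
    Dop i (fun η => g (dilCLM ρ t η)) ξ = t ^ (ρ i) * Dop i g (dilCLM ρ t ξ) := by
  have h1 : HasFDerivAt (fun η => g (dilCLM ρ t η))
      ((fderiv ℝ g (dilCLM ρ t ξ)).comp (dilCLM ρ t)) ξ :=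
    ((hg.differentiable (by simp) (dilCLM ρ t ξ)).hasFDerivAt).comp ξ (dilCLM ρ t).hasFDerivAt
  unfold Dop
  rw [h1.fderiv]
  simp only [ContinuousLinearMap.coe_comp', Function.comp_apply, dilCLM_single]
  rw [map_smul]
  simp

theorem iterDop_dil {d : ℕ} (ρ : Fin d → ℕ) {t : ℝ} (i : Fin d) (m : ℕ) {g : (Fin d → ℝ) → ℝ}
    (hg : ContDiff ℝ (⊤ : ℕ∞) g) (ξ : Fin d → ℝ) :
    (Dop i)^[m] (fun η => g (dilCLM ρ t η)) ξ
      = (t ^ (ρ i)) ^ m * (Dop i)^[m] g (dilCLM ρ t ξ) := by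
  induction m generalizing g with
  | zero => simp
  | succ m ih =>
    simp only [Function.iterate_succ_apply]
    have hDg : ContDiff ℝ (⊤ : ℕ∞) (Dop i g) := by
      rw [← contDiffOn_univ] at hg ⊢
      exact Dop_contDiffOn isOpen_univ hg
    have h1 : Dop i (fun η => g (dilCLM ρ t η))
        = fun η => t ^ (ρ i) * Dop i g (dilCLM ρ t η) + 0 * Dop i g (dilCLM ρ t η) := by
      funext η
      rw [Dop_dil ρ i hg η]; ring
    rw [h1]
    have hGL : ContDiff ℝ (⊤ : ℕ∞) (fun η => Dop i g (dilCLM ρ t η)) :=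
      hDg.comp (dilCLM ρ t).contDiff
    have h2 := iterDop_comb isOpen_univ (i := i) m (hGL.contDiffOn) (hGL.contDiffOn)
      (t ^ (ρ i)) 0 (Set.mem_univ ξ)
    rw [h2]
    beta_reduce
    rw [ih hDg]
    ring

theorem DmL_dil {d : ℕ} (ρ : Fin d → ℕ) {t : ℝ} (ht : 0 < t) (β : Fin d → ℕ)
    (l : List (Fin d)) :
    ∃ c : ℝ, 0 < c ∧ ∀ g : (Fin d → ℝ) → ℝ, ContDiff ℝ (⊤ : ℕ∞) g → ∀ ξ,
      DmL β l (fun η => g (dilCLM ρ t η)) ξ = c * DmL β l g (dilCLM ρ t ξ) := by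
  induction l with
  | nil => exact ⟨1, one_pos, fun g _ ξ => by simp [DmL]⟩
  | cons i l ih =>
    obtain ⟨c, hc, H⟩ := ih
    refine ⟨c * (t ^ (ρ i)) ^ (β i), by positivity, fun g hg ξ => ?_⟩
    have hGsm : ContDiff ℝ (⊤ : ℕ∞) (DmL β l g) := by
      rw [← contDiffOn_univ] at hg ⊢
      exact DmL_contDiffOn isOpen_univ β l hg
    have h1 : DmL β l (fun η => g (dilCLM ρ t η))
        = fun η => c * DmL β l g (dilCLM ρ t η) + 0 * DmL β l g (dilCLM ρ t η) := by
      funext η; rw [H g hg η]; ring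
    rw [DmL_cons, h1]
    have hGL : ContDiff ℝ (⊤ : ℕ∞) (fun η => DmL β l g (dilCLM ρ t η)) :=
      hGsm.comp (dilCLM ρ t).contDiff
    rw [iterDop_comb isOpen_univ (i := i) (β i) hGL.contDiffOn hGL.contDiffOn c 0
      (Set.mem_univ ξ)]
    beta_reduce
    rw [iterDop_dil ρ i (β i) hGsm ξ, DmL_cons]
    ring

section joint
variable {n d : ℕ} {s : Set (Fin n → ℝ)}

theorem joint_step (hs : IsOpen s) {P : (Fin n → ℝ) × (Fin d → ℝ) → ℝ}
    (hP : ContDiffOn ℝ (⊤ : ℕ∞) P (s ×ˢ Set.univ)) (i : Fin d) :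
    ContDiffOn ℝ (⊤ : ℕ∞) (fun p : (Fin n → ℝ) × (Fin d → ℝ) =>
      Dop i (fun ξ => P (p.1, ξ)) p.2) (s ×ˢ Set.univ) := by
  have hso : IsOpen (s ×ˢ (Set.univ : Set (Fin d → ℝ))) := hs.prod isOpen_univ
  have key : ∀ p ∈ s ×ˢ (Set.univ : Set (Fin d → ℝ)),
      Dop i (fun ξ => P (p.1, ξ)) p.2
        = fderiv ℝ P p ((0 : Fin n → ℝ), (Pi.single i 1 : Fin d → ℝ)) := by
    intro p hp
    have hdP : DifferentiableAt ℝ P p :=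
      (hP.differentiableOn (by simp)).differentiableAt (hso.mem_nhds hp)
    have h2 : HasFDerivAt (fun ξ : Fin d → ℝ => (p.1, ξ))
        (((0 : (Fin d → ℝ) →L[ℝ] (Fin n → ℝ))).prod (ContinuousLinearMap.id ℝ _)) p.2 :=
      (hasFDerivAt_const p.1 p.2).prodMk (hasFDerivAt_id p.2)
    have h3 : HasFDerivAt (fun ξ => P (p.1, ξ))
        ((fderiv ℝ P p).comp
          (((0 : (Fin d → ℝ) →L[ℝ] (Fin n → ℝ))).prod (ContinuousLinearMap.id ℝ _))) p.2 :=
      hdP.hasFDerivAt.comp p.2 h2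
    unfold Dop
    rw [h3.fderiv]
    simp
  refine ContDiffOn.congr ?_ key
  exact (hP.fderiv_of_isOpen hso (by simp)).clm_apply contDiffOn_const

theorem joint_iter (hs : IsOpen s) (m : ℕ) {P : (Fin n → ℝ) × (Fin d → ℝ) → ℝ}
    (hP : ContDiffOn ℝ (⊤ : ℕ∞) P (s ×ˢ Set.univ)) (i : Fin d) :
    ContDiffOn ℝ (⊤ : ℕ∞) (fun p : (Fin n → ℝ) × (Fin d → ℝ) =>
      (Dop i)^[m] (fun ξ => P (p.1, ξ)) p.2) (s ×ˢ Set.univ) := by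
  induction m generalizing P with
  | zero => exact hP
  | succ m ih =>
    simp only [Function.iterate_succ_apply]
    exact ih (joint_step hs hP i)

theorem joint_DmL (hs : IsOpen s) (β : Fin d → ℕ) (l : List (Fin d))
    {P : (Fin n → ℝ) × (Fin d → ℝ) → ℝ} (hP : ContDiffOn ℝ (⊤ : ℕ∞) P (s ×ˢ Set.univ)) :
    ContDiffOn ℝ (⊤ : ℕ∞) (fun p : (Fin n → ℝ) × (Fin d → ℝ) =>
      DmL β l (fun ξ => P (p.1, ξ)) p.2) (s ×ˢ Set.univ) := by
  induction l with
  | nil => exact hP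
  | cons i l ih =>
    simp only [DmL_cons]
    exact joint_iter hs (β i) ih i

theorem slice_x (hs : IsOpen s) (β : Fin d → ℕ) (l : List (Fin d))
    {P : (Fin n → ℝ) × (Fin d → ℝ) → ℝ} (hP : ContDiffOn ℝ (⊤ : ℕ∞) P (s ×ˢ Set.univ))
    (ξ₀ : Fin d → ℝ) :
    ContDiffOn ℝ (⊤ : ℕ∞) (fun y => DmL β l (fun ξ => P (y, ξ)) ξ₀) s := by
  have := (joint_DmL hs β l hP).comp
    ((contDiff_id.prodMk contDiff_const).contDiffOn :
      ContDiffOn ℝ (⊤ : ℕ∞) (fun y : Fin n → ℝ => (y, ξ₀)) s)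
    (fun y hy => ⟨hy, Set.mem_univ _⟩)
  exact this

theorem slice_xi (hs : IsOpen s) {P : (Fin n → ℝ) × (Fin d → ℝ) → ℝ}
    (hP : ContDiffOn ℝ (⊤ : ℕ∞) P (s ×ˢ Set.univ)) {y : Fin n → ℝ} (hy : y ∈ s) :
    ContDiff ℝ (⊤ : ℕ∞) (fun ξ => P (y, ξ)) := by
  rw [← contDiffOn_univ]
  exact hP.comp ((contDiff_const.prodMk contDiff_id).contDiffOn)
    (fun ξ _ => ⟨hy, Set.mem_univ _⟩)

end joint

theorem dil_lower {d : ℕ} (ρ : Fin d → ℕ) {t : ℝ} (ht : 0 < t) :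
    ∃ c : ℝ, 0 < c ∧ c ≤ 1 ∧ ∀ ξ : Fin d → ℝ, c * (1 + ‖ξ‖) ≤ 1 + ‖dil ρ t ξ‖ := by
  set M := Finset.univ.sup ρ with hM
  refine ⟨min (t ^ M) 1, lt_min (by positivity) one_pos, min_le_right _ _, fun ξ => ?_⟩
  set c := min (t ^ M) 1 with hc
  have hc0 : 0 < c := lt_min (by positivity) one_pos
  have hkey : ∀ i, c ≤ t ^ (ρ i) := by
    intro i
    rcases le_or_gt 1 t with h1 | h1
    · exact le_trans (min_le_right _ _) (one_le_pow₀ h1)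
    · exact le_trans (min_le_left _ _)
        (pow_le_pow_of_le_one ht.le h1.le (Finset.le_sup (Finset.mem_univ i)))
  have hnorm : c * ‖ξ‖ ≤ ‖dil ρ t ξ‖ := by
    have h2 : ‖ξ‖ ≤ c⁻¹ * ‖dil ρ t ξ‖ := by
      rw [pi_norm_le_iff_of_nonneg (by positivity)]
      intro i
      have h3 : ‖ξ i‖ ≤ c⁻¹ * ‖(dil ρ t ξ) i‖ := by
        have h4 : c * ‖ξ i‖ ≤ ‖(dil ρ t ξ) i‖ := by
          simp only [dil, Real.norm_eq_abs, abs_mul]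
          rw [abs_of_nonneg (by positivity : (0:ℝ) ≤ t ^ (ρ i))]
          exact mul_le_mul_of_nonneg_right (hkey i) (abs_nonneg _)
        calc ‖ξ i‖ = c⁻¹ * (c * ‖ξ i‖) := by field_simp
        _ ≤ c⁻¹ * ‖(dil ρ t ξ) i‖ :=
            mul_le_mul_of_nonneg_left h4 (by positivity)
      exact h3.trans (mul_le_mul_of_nonneg_left (norm_le_pi_norm _ i) (by positivity))
    calc c * ‖ξ‖ ≤ c * (c⁻¹ * ‖dil ρ t ξ‖) := mul_le_mul_of_nonneg_left h2 hc0.le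
    _ = ‖dil ρ t ξ‖ := by field_simp
  have : c * (1 + ‖ξ‖) = c + c * ‖ξ‖ := by ring
  rw [this]
  have h5 : c ≤ 1 := min_le_right _ _
  linarith

/-- Schwartz class in the second variable, locally uniformly in the first. -/
def SchwartzLoc {n d : ℕ} (U : Set (Fin n → ℝ)) (f : (Fin n → ℝ) → (Fin d → ℝ) → ℝ) : Prop :=
  ContDiffOn ℝ (⊤ : ℕ∞) (fun p : (Fin n → ℝ) × (Fin d → ℝ) => f p.1 p.2) (U ×ˢ Set.univ) ∧
  ∀ K : Set (Fin n → ℝ), K ⊆ U → IsCompact K →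
    ∀ (k : ℕ) (α : Fin n → ℕ) (β : Fin d → ℕ), ∃ C : ℝ, 0 < C ∧
      ∀ x ∈ K, ∀ ξ : Fin d → ℝ,
        |Dm α (fun y => Dm β (f y) ξ) x| ≤ C * (1 + ‖ξ‖) ^ (-(k : ℝ))

theorem SchwartzLoc_zero {n d : ℕ} (U : Set (Fin n → ℝ)) :
    SchwartzLoc U (fun (_ : Fin n → ℝ) (_ : Fin d → ℝ) => (0:ℝ)) := by
  constructor
  · exact contDiffOn_const
  · intro K _ _ k α β
    refine ⟨1, one_pos, fun x _ ξ => ?_⟩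
    have hz : ∀ {j : ℕ} (γ : Fin j → ℕ) (z : Fin j → ℝ), Dm γ (fun _ => (0:ℝ)) z = 0 := by
      intro j γ z
      have h0 : (fun _ : Fin j → ℝ => (0:ℝ))
          = fun y => (0:ℝ) * (0:ℝ) + (0:ℝ) * (0:ℝ) := by funext y; ring
      rw [Dm_eq, h0, DmL_comb isOpen_univ γ (List.finRange j)
        (contDiffOn_const (c := (0:ℝ))) (contDiffOn_const (c := (0:ℝ))) 0 0 (Set.mem_univ z)]
      simp
    have h1 : (fun y : Fin n → ℝ => Dm β (fun _ : Fin d → ℝ => (0:ℝ)) ξ)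
        = fun _ => (0:ℝ) := by
      funext y; exact hz β ξ
    rw [h1, hz α x]
    simp only [abs_zero, one_mul]
    positivity

theorem SchwartzLoc_add {n d : ℕ} {U : Set (Fin n → ℝ)} (hU : IsOpen U)
    {f g : (Fin n → ℝ) → (Fin d → ℝ) → ℝ}
    (hf : SchwartzLoc U f) (hg : SchwartzLoc U g) :
    SchwartzLoc U (fun x ξ => f x ξ + g x ξ) := by
  constructor
  · exact hf.1.add hg.1
  · intro K hKU hK k α β
    obtain ⟨Cf, hCf, Hf⟩ := hf.2 K hKU hK k α β
    obtain ⟨Cg, hCg, Hg⟩ := hg.2 K hKU hK k α β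
    refine ⟨Cf + Cg, by positivity, fun x hx ξ => ?_⟩
    set F : (Fin n → ℝ) → ℝ := fun y => Dm β (f y) ξ with hF_def
    set G : (Fin n → ℝ) → ℝ := fun y => Dm β (g y) ξ with hG_def
    have hF : ContDiffOn ℝ (⊤ : ℕ∞) F U := slice_x hU β (List.finRange d) hf.1 ξ
    have hG : ContDiffOn ℝ (⊤ : ℕ∞) G U := slice_x hU β (List.finRange d) hg.1 ξ
    have hEq : Set.EqOn (fun y => Dm β (fun ζ => f y ζ + g y ζ) ξ)
        (fun y => 1 * F y + 1 * G y) U := by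
      intro y hy
      have hfy : ContDiff ℝ (⊤ : ℕ∞) (f y) := slice_xi hU hf.1 hy
      have hgy : ContDiff ℝ (⊤ : ℕ∞) (g y) := slice_xi hU hg.1 hy
      have h1 : (fun ζ => f y ζ + g y ζ) = fun ζ => 1 * f y ζ + 1 * g y ζ := by
        funext ζ; ring
      show Dm β (fun ζ => f y ζ + g y ζ) ξ = 1 * F y + 1 * G y
      rw [Dm_eq, h1, DmL_comb isOpen_univ β (List.finRange d) hfy.contDiffOn hgy.contDiffOn
        1 1 (Set.mem_univ ξ)]
      simp only [hF_def, hG_def, Dm_eq]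
    have e1 : Dm α (fun y => Dm β (fun ζ => f y ζ + g y ζ) ξ) x
        = 1 * Dm α F x + 1 * Dm α G x := by
      rw [Dm_eq]
      rw [DmL_congr hU α (List.finRange n) hEq (hKU hx)]
      rw [DmL_comb hU α (List.finRange n) hF hG 1 1 (hKU hx)]
      simp only [Dm_eq]
    show |Dm α (fun y => Dm β (fun ζ => f y ζ + g y ζ) ξ) x| ≤ _
    rw [e1]
    calc |1 * Dm α F x + 1 * Dm α G x| ≤ |Dm α F x| + |Dm α G x| := by
          simpa using abs_add_le _ _
    _ ≤ Cf * (1 + ‖ξ‖) ^ (-(k:ℝ)) + Cg * (1 + ‖ξ‖) ^ (-(k:ℝ)) :=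
          add_le_add (Hf x hx ξ) (Hg x hx ξ)
    _ = (Cf + Cg) * (1 + ‖ξ‖) ^ (-(k:ℝ)) := by ring

theorem SchwartzLoc_smul_dil {n d : ℕ} (ρ : Fin d → ℕ) {U : Set (Fin n → ℝ)} (hU : IsOpen U)
    {f : (Fin n → ℝ) → (Fin d → ℝ) → ℝ} (a : ℝ) {t : ℝ} (ht : 0 < t)
    (hf : SchwartzLoc U f) :
    SchwartzLoc U (fun x ξ => a * f x (dil ρ t ξ)) := by
  constructor
  · have hmap : ContDiff ℝ (⊤ : ℕ∞) (fun p : (Fin n → ℝ) × (Fin d → ℝ) => (p.1, dilCLM ρ t p.2)) :=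
      contDiff_fst.prodMk ((dilCLM ρ t).contDiff.comp contDiff_snd)
    have h1 : ContDiffOn ℝ (⊤ : ℕ∞) (fun p : (Fin n → ℝ) × (Fin d → ℝ) =>
        f p.1 (dilCLM ρ t p.2)) (U ×ˢ Set.univ) :=
      hf.1.comp hmap.contDiffOn (fun p hp => ⟨hp.1, Set.mem_univ _⟩)
    exact contDiffOn_const.mul h1
  · intro K hKU hK k α β
    obtain ⟨c, hc, Hc⟩ := DmL_dil ρ ht β (List.finRange d)
    obtain ⟨c₀, hc₀, hc₀1, Hc₀⟩ := dil_lower ρ ht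
    obtain ⟨Cf, hCf, Hf⟩ := hf.2 K hKU hK k α β
    refine ⟨|a| * c * Cf * c₀ ^ (-(k:ℝ)) + 1, by positivity, fun x hx ξ => ?_⟩
    set F : (Fin n → ℝ) → ℝ := fun y => Dm β (f y) (dil ρ t ξ) with hF_def
    have hF : ContDiffOn ℝ (⊤ : ℕ∞) F U := slice_x hU β (List.finRange d) hf.1 (dil ρ t ξ)
    have hEq : Set.EqOn (fun y => Dm β (fun η => a * f y (dil ρ t η)) ξ)
        (fun y => (a * c) * F y + 0 * F y) U := by
      intro y hy
      have hfy : ContDiff ℝ (⊤ : ℕ∞) (f y) := slice_xi hU hf.1 hy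
      have hfyL : ContDiff ℝ (⊤ : ℕ∞) (fun η => f y (dilCLM ρ t η)) :=
        hfy.comp (dilCLM ρ t).contDiff
      have e2 : (fun η => a * f y (dil ρ t η))
          = fun η => a * (fun η' => f y (dilCLM ρ t η')) η
              + 0 * (fun η' => f y (dilCLM ρ t η')) η := by
        funext η; rw [dil_eq]; ring
      show Dm β (fun η => a * f y (dil ρ t η)) ξ = (a * c) * F y + 0 * F y
      rw [Dm_eq, e2, DmL_comb isOpen_univ β (List.finRange d) hfyL.contDiffOn hfyL.contDiffOn
        a 0 (Set.mem_univ ξ)]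
      beta_reduce
      rw [Hc (f y) hfy ξ, dilCLM_apply]
      simp only [hF_def, Dm_eq]
      ring
    have e1 : Dm α (fun y => Dm β (fun η => a * f y (dil ρ t η)) ξ) x
        = (a * c) * Dm α F x + 0 * Dm α F x := by
      rw [Dm_eq]
      rw [DmL_congr hU α (List.finRange n) hEq (hKU hx)]
      rw [DmL_comb hU α (List.finRange n) hF hF (a * c) 0 (hKU hx)]
      simp only [Dm_eq]
    show |Dm α (fun y => Dm β (fun η => a * f y (dil ρ t η)) ξ) x| ≤ _
    rw [e1]
    have hrpow : (1 + ‖dil ρ t ξ‖) ^ (-(k:ℝ)) ≤ c₀ ^ (-(k:ℝ)) * (1 + ‖ξ‖) ^ (-(k:ℝ)) := by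
      have h1 : (1 + ‖dil ρ t ξ‖) ^ (-(k:ℝ)) ≤ (c₀ * (1 + ‖ξ‖)) ^ (-(k:ℝ)) :=
        Real.rpow_le_rpow_of_nonpos (by positivity) (Hc₀ ξ) (by simp)
      rwa [Real.mul_rpow hc₀.le (by positivity)] at h1
    have hbound : |Dm α F x| ≤ Cf * (1 + ‖dil ρ t ξ‖) ^ (-(k:ℝ)) := Hf x hx (dil ρ t ξ)
    have habs : |(a * c) * Dm α F x + 0 * Dm α F x| = |a| * c * |Dm α F x| := by
      rw [zero_mul, add_zero, abs_mul, abs_mul, abs_of_pos hc]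
    rw [habs]
    have h3 : |a| * c * |Dm α F x| ≤ |a| * c * (Cf * (1 + ‖dil ρ t ξ‖) ^ (-(k:ℝ)))  :=
      mul_le_mul_of_nonneg_left hbound (by positivity)
    have h4 : |a| * c * (Cf * (1 + ‖dil ρ t ξ‖) ^ (-(k:ℝ)))
        ≤ |a| * c * (Cf * (c₀ ^ (-(k:ℝ)) * (1 + ‖ξ‖) ^ (-(k:ℝ)))) := by
      have := mul_le_mul_of_nonneg_left hrpow hCf.le
      exact mul_le_mul_of_nonneg_left this (by positivity)
    have h5 : |a| * c * (Cf * (c₀ ^ (-(k:ℝ)) * (1 + ‖ξ‖) ^ (-(k:ℝ))))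
        ≤ (|a| * c * Cf * c₀ ^ (-(k:ℝ)) + 1) * (1 + ‖ξ‖) ^ (-(k:ℝ)) := by
      have hpos : (0:ℝ) ≤ (1 + ‖ξ‖) ^ (-(k:ℝ)) := by positivity
      nlinarith [hpos]
    linarith

theorem dil_one {d : ℕ} (ρ : Fin d → ℕ) (ξ : Fin d → ℝ) : dil ρ 1 ξ = ξ := by
  funext i; simp [dil]

theorem dil_comp {d : ℕ} (ρ : Fin d → ℕ) (s t : ℝ) (ξ : Fin d → ℝ) :
    dil ρ s (dil ρ t ξ) = dil ρ (s * t) ξ := by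
  funext i; simp [dil, mul_pow]; ring

theorem essHomog_scales_subgroup {n d : ℕ} (ρ : Fin d → ℕ) (hρ : ∀ i, 1 ≤ ρ i)
    (U : Set (Fin n → ℝ)) (hU : IsOpen U) (m : ℝ)
    (u : (Fin n → ℝ) → (Fin d → ℝ) → ℝ)
    (hu : ContDiffOn ℝ (⊤ : ℕ∞) (fun p : (Fin n → ℝ) × (Fin d → ℝ) => u p.1 p.2) (U ×ˢ Set.univ)) :
    letI S : Set ℝ := {s | 0 < s ∧ SchwartzLoc U (fun x ξ => u x (dil ρ s ξ) - s ^ m * u x ξ)}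
    (1 ∈ S) ∧ (∀ s ∈ S, s⁻¹ ∈ S) ∧ (∀ s ∈ S, ∀ t ∈ S, s * t ∈ S) ∧
      ((∀ s ∈ Set.Icc (1:ℝ) 2, s ∈ S) → ∀ s : ℝ, 0 < s → s ∈ S) := by
  have h1 : (1:ℝ) ∈ {s : ℝ | 0 < s ∧
      SchwartzLoc U (fun x ξ => u x (dil ρ s ξ) - s ^ m * u x ξ)} := by
    refine ⟨one_pos, ?_⟩
    have h0 : (fun x ξ => u x (dil ρ 1 ξ) - (1:ℝ) ^ m * u x ξ)
        = fun (_ : Fin n → ℝ) (_ : Fin d → ℝ) => (0:ℝ) := by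
      funext x ξ; rw [dil_one, Real.one_rpow]; ring
    rw [h0]
    exact SchwartzLoc_zero U
  have hinv : ∀ s ∈ {s : ℝ | 0 < s ∧
      SchwartzLoc U (fun x ξ => u x (dil ρ s ξ) - s ^ m * u x ξ)},
      s⁻¹ ∈ {s : ℝ | 0 < s ∧
      SchwartzLoc U (fun x ξ => u x (dil ρ s ξ) - s ^ m * u x ξ)} := by
    rintro s ⟨hs0, hsS⟩
    refine ⟨inv_pos.2 hs0, ?_⟩
    have key := SchwartzLoc_smul_dil ρ hU (-(s ^ m)⁻¹) (inv_pos.2 hs0) hsS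
    beta_reduce at key
    have he : (fun (x : Fin n → ℝ) (ξ : Fin d → ℝ) =>
        -(s ^ m)⁻¹ * (u x (dil ρ s (dil ρ s⁻¹ ξ)) - s ^ m * u x (dil ρ s⁻¹ ξ)))
        = fun x ξ => u x (dil ρ s⁻¹ ξ) - (s⁻¹) ^ m * u x ξ := by
      funext x ξ
      rw [dil_comp, mul_inv_cancel₀ hs0.ne', dil_one, Real.inv_rpow hs0.le]
      have hsm : s ^ m ≠ 0 := (Real.rpow_pos_of_pos hs0 m).ne'
      field_simp
      ring
    rwa [he] at key
  have hmul : ∀ s ∈ {s : ℝ | 0 < s ∧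
      SchwartzLoc U (fun x ξ => u x (dil ρ s ξ) - s ^ m * u x ξ)},
      ∀ t ∈ {s : ℝ | 0 < s ∧
      SchwartzLoc U (fun x ξ => u x (dil ρ s ξ) - s ^ m * u x ξ)},
      s * t ∈ {s : ℝ | 0 < s ∧
      SchwartzLoc U (fun x ξ => u x (dil ρ s ξ) - s ^ m * u x ξ)} := by
    rintro s ⟨hs0, hsS⟩ t ⟨ht0, htS⟩
    refine ⟨mul_pos hs0 ht0, ?_⟩
    have key1 := SchwartzLoc_smul_dil ρ hU 1 ht0 hsS
    have key2 := SchwartzLoc_smul_dil ρ hU (s ^ m) one_pos htS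
    have key := SchwartzLoc_add hU key1 key2
    beta_reduce at key
    have he : (fun (x : Fin n → ℝ) (ξ : Fin d → ℝ) =>
        1 * (u x (dil ρ s (dil ρ t ξ)) - s ^ m * u x (dil ρ t ξ))
          + s ^ m * (u x (dil ρ t (dil ρ 1 ξ)) - t ^ m * u x (dil ρ 1 ξ)))
        = fun x ξ => u x (dil ρ (s * t) ξ) - (s * t) ^ m * u x ξ := by
      funext x ξ
      rw [dil_one, dil_comp, Real.mul_rpow hs0.le ht0.le]
      ring
    rwa [he] at key
  refine ⟨h1, hinv, hmul, ?_⟩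
  intro H s hs
  have hA : ∀ N : ℕ, ∀ r : ℝ, 1 ≤ r → r ≤ 2 ^ N → r ∈ {s : ℝ | 0 < s ∧
      SchwartzLoc U (fun x ξ => u x (dil ρ s ξ) - s ^ m * u x ξ)} := by
    intro N
    induction N with
    | zero =>
      intro r h1r hr2
      exact H r ⟨h1r, by norm_num at hr2; linarith⟩
    | succ N ih =>
      intro r h1r hr2
      rcases le_or_gt r 2 with h | h
      · exact H r ⟨h1r, h⟩
      · have h2 := hmul 2 (H 2 ⟨one_le_two, le_refl 2⟩) (r / 2)
          (ih (r / 2) (by linarith) (by rw [pow_succ] at hr2; linarith))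
        have : 2 * (r / 2) = r := by ring
        rwa [this] at h2
  rcases le_or_gt 1 s with h1s | h1s
  · obtain ⟨N, hN⟩ := pow_unbounded_of_one_lt s (one_lt_two (α := ℝ))
    exact hA N s h1s hN.le
  · have hs' : (1:ℝ) ≤ s⁻¹ := by
      rw [le_inv_comm₀] <;> simp [hs, h1s.le] <;> linarith
    obtain ⟨N, hN⟩ := pow_unbounded_of_one_lt s⁻¹ (one_lt_two (α := ℝ))
    have := hinv s⁻¹ (hA N s⁻¹ hs' hN.le)
    rwa [inv_inv] at this
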